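/- Let ψ₁, ψ₂, ψ₃ ∈ ℝ⁴ be linearly independent real unit vectors and let r be the 3×3 real symmetric matrix with entries r_{ij} = ψᵢᵀ J ψ_j. Suppose r_{ii} > 0 for i = 1,2,3, r_{ii}r_{jj} − r_{ij}² < 0 for all i ≠ j, and det(r) > 0. Then for every probability vector (p₁, p₂, p₃) with all pᵢ > 0, the mixture ρ = Σᵢ pᵢ ψᵢψᵢᵀ satisfies C(ρ) = Σᵢ pᵢ r_{ii} = Σᵢ pᵢ C(ψᵢψᵢᵀ). -/

import Mathlib

open Matrix Polynomial

noncomputable section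

/-- `J = σ_y ⊗ σ_y` as a complex 4×4 matrix (standard product basis). -/
def Jc : Matrix (Fin 4) (Fin 4) ℂ :=
  !![0, 0, 0, -1; 0, 0, 1, 0; 0, 1, 0, 0; -1, 0, 0, 0]

/-- `J = σ_y ⊗ σ_y` as a real 4×4 matrix (standard product basis). -/
def Jr : Matrix (Fin 4) (Fin 4) ℝ :=
  !![0, 0, 0, -1; 0, 0, 1, 0; 0, 1, 0, 0; -1, 0, 0, 0]

/-- The spin-flipped matrix `ρ̃ = J ρ̄ J`. -/
def spinFlip (ρ : Matrix (Fin 4) (Fin 4) ℂ) : Matrix (Fin 4) (Fin 4) ℂ :=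
  Jc * ρ.map (starRingEnd ℂ) * Jc

/-- The concurrence of a two-qubit density matrix `ρ`:
`max (0, √μ₁ − √μ₂ − √μ₃ − √μ₄)` where `μ₁ ≥ μ₂ ≥ μ₃ ≥ μ₄` are the (real,
nonnegative) eigenvalues of `ρ ρ̃` listed with multiplicity. -/
def concurrence (ρ : Matrix (Fin 4) (Fin 4) ℂ) : ℝ :=
  let l : List ℝ :=
    (((ρ * spinFlip ρ).charpoly.roots.map Complex.re).sort (· ≤ ·))
  max 0 (Real.sqrt (l.getD 3 0) - Real.sqrt (l.getD 2 0) -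
    Real.sqrt (l.getD 1 0) - Real.sqrt (l.getD 0 0))

/-- The (complex) density matrix of the pure state given by a real 4-vector `ψ`,
namely `ψ ψᵀ`. -/
def pureState (ψ : Fin 4 → ℝ) : Matrix (Fin 4) (Fin 4) ℂ :=
  (Matrix.vecMulVec ψ ψ).map Complex.ofReal

end

/-!
Write `ρ = B Bᵀ` with `B = Ψ √P`, where the columns of `Ψ` are the `ψᵢ`. Since `XY` and `YX` have
the same nonzero spectrum, `ρρ̃ = (ρJ)²` has the eigenvalues `0, λ₁², λ₂², λ₃²`, where the `λᵢ`
are the eigenvalues of the symmetric matrix `M = √P r √P`. Now `tr M = ∑ pᵢ rᵢᵢ > 0`,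
`det M = p₁p₂p₃ det r > 0`, and `tr (M²) > (tr M)²` because every `2 × 2` principal minor of `r`
is negative. So exactly one `λᵢ` is positive, it dominates the other two in absolute value, and
the concurrence `|λ₁| - |λ₂| - |λ₃|` equals `λ₁ + λ₂ + λ₃ = tr M`. A pure state is the case of a
single vector, where `M` is the `1 × 1` matrix `(r)`.
-/

lemma charpoly_mul_sq_of_card_le {R m n : Type*} [CommRing R] [Fintype m] [Fintype n]
    [DecidableEq m] [DecidableEq n] (B : Matrix n m R) (C : Matrix m n R)
    (hle : Fintype.card m ≤ Fintype.card n) :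
    ((B * C) ^ 2).charpoly = X ^ (Fintype.card n - Fintype.card m) * ((C * B) ^ 2).charpoly := by
  rw [sq, sq, show B * C * (B * C) = B * (C * B * C) by simp only [Matrix.mul_assoc],
    charpoly_mul_comm_of_le _ _ hle, Matrix.mul_assoc (C * B)]

lemma Matrix.IsHermitian.charpoly_sq {n : Type*} [Fintype n] [DecidableEq n]
    {M : Matrix n n ℝ} (hM : M.IsHermitian) :
    (M ^ 2).charpoly = ∏ i, (X - C (hM.eigenvalues i ^ 2)) := by
  rw [← cfc_pow_id (R := ℝ) M 2 hM.isSelfAdjoint, hM.charpoly_cfc_eq]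
  rfl

lemma Matrix.trace_eq_sum_of_charpoly_eq_prod {R n : Type*} [CommRing R] [Nontrivial R]
    [Fintype n] [DecidableEq n] [Nonempty n] {A : Matrix n n R} {μ : n → R}
    (h : A.charpoly = ∏ i, (X - C (μ i))) : A.trace = ∑ i, μ i := by
  rw [trace_eq_neg_charpoly_coeff, h, ← Finset.card_univ,
    prod_X_sub_C_coeff_card_pred _ _ Finset.univ_nonempty.card_pos, neg_neg]

lemma sum_smul_vecMulVec {R ι n : Type*} [CommSemiring R] [Fintype ι] [DecidableEq ι]
    (p : ι → R) (u v : ι → n → R) :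
    ∑ i, p i • vecMulVec (u i) (v i) = (of u)ᵀ * diagonal p * of v := by
  ext a b
  rw [Matrix.mul_apply]
  simp only [Matrix.sum_apply, Matrix.smul_apply, vecMulVec_apply, mul_diagonal,
    transpose_apply, of_apply, smul_eq_mul]
  exact Finset.sum_congr rfl fun i _ => by ring

lemma trace_diagonal_mul {R ι : Type*} [CommSemiring R] [Fintype ι] [DecidableEq ι] (p : ι → R)
    (r : Matrix ι ι R) : (diagonal p * r).trace = ∑ i, p i * r i i := by
  simp [trace, diagonal_mul]

lemma trace_diagonal_mul_sq {R ι : Type*} [CommSemiring R] [Fintype ι] [DecidableEq ι]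
    (p : ι → R) (r : Matrix ι ι R) :
    ((diagonal p * r) ^ 2).trace = ∑ i, ∑ j, p i * r i j * (p j * r j i) := by
  refine Finset.sum_congr rfl fun i _ => ?_
  rw [sq, diag_apply, Matrix.mul_apply]
  simp only [diagonal_mul]

lemma sq_trace_diagonal_mul_lt {ι : Type*} [Fintype ι] [DecidableEq ι] [Nontrivial ι]
    {p : ι → ℝ} (hp : ∀ i, 0 < p i) {r : Matrix ι ι ℝ} (hr : rᵀ = r)
    (hoff : ∀ i j, i ≠ j → r i i * r j j - r i j ^ 2 < 0) :
    (diagonal p * r).trace ^ 2 < ((diagonal p * r) ^ 2).trace := by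
  have hlt : ∀ i j, i ≠ j → p i * r i i * (p j * r j j) < p i * r i j * (p j * r j i) := by
    intro i j hij
    have hgap : p i * r i j * (p j * r j i) - p i * r i i * (p j * r j j) =
        p i * p j * -(r i i * r j j - r i j ^ 2) := by
      rw [← transpose_apply r j i, hr]; ring
    have := mul_pos (mul_pos (hp i) (hp j)) (neg_pos.2 (hoff i j hij))
    linarith
  have hle : ∀ i j, p i * r i i * (p j * r j j) ≤ p i * r i j * (p j * r j i) := by
    intro i j
    rcases eq_or_ne i j with rfl | hij
    exacts [le_rfl, (hlt i j hij).le]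
  obtain ⟨i, j, hij⟩ := exists_pair_ne ι
  rw [trace_diagonal_mul, sq, Finset.sum_mul_sum, trace_diagonal_mul_sq]
  exact Finset.sum_lt_sum (fun i _ => Finset.sum_le_sum fun j _ => hle i j)
    ⟨i, Finset.mem_univ _,
      Finset.sum_lt_sum (fun j _ => hle i j) ⟨j, Finset.mem_univ _, hlt i j hij⟩⟩

lemma exists_perm_nonpos_of_sq_sum_lt {μ : Fin 3 → ℝ} (hsq : (∑ i, μ i) ^ 2 < ∑ i, μ i ^ 2)
    (hprod : 0 < ∏ i, μ i) : ∃ σ : Equiv.Perm (Fin 3), μ (σ 1) ≤ 0 ∧ μ (σ 2) ≤ 0 := by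
  simp only [Fin.sum_univ_three, Fin.prod_univ_three] at hsq hprod
  rcases le_or_gt (μ 0) 0 with h0 | h0 <;> rcases le_or_gt (μ 1) 0 with h1 | h1 <;>
    rcases le_or_gt (μ 2) 0 with h2 | h2
  · nlinarith [mul_nonneg_of_nonpos_of_nonpos h0 h1]
  · exact ⟨Equiv.swap 0 2, by simpa [Equiv.swap_apply_of_ne_of_ne] using ⟨h1, h0⟩⟩
  · exact ⟨Equiv.swap 0 1, by simpa [Equiv.swap_apply_of_ne_of_ne] using ⟨h0, h2⟩⟩
  · nlinarith [mul_pos h1 h2]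
  · exact ⟨1, h1, h2⟩
  · nlinarith [mul_pos h0 h2]
  · nlinarith [mul_pos h0 h1]
  · nlinarith [mul_pos h0 h1, mul_pos h0 h2, mul_pos h1 h2]

lemma Jr_transpose : Jrᵀ = Jr := by
  ext i j; fin_cases i <;> fin_cases j <;> rfl

lemma Jc_eq_map_ofReal : Jc = Jr.map Complex.ofReal := by
  ext i j; fin_cases i <;> fin_cases j <;> simp [Jc, Jr]

lemma map_ofReal_mul {n : Type*} [Fintype n] (A B : Matrix n n ℝ) :
    (A * B).map Complex.ofReal = A.map Complex.ofReal * B.map Complex.ofReal :=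
  Matrix.map_mul (f := Complex.ofRealHom)

lemma spinFlip_map_ofReal (A : Matrix (Fin 4) (Fin 4) ℝ) :
    spinFlip (A.map Complex.ofReal) = (Jr * A * Jr).map Complex.ofReal := by
  have hconj : (A.map Complex.ofReal).map (starRingEnd ℂ) = A.map Complex.ofReal := by
    ext i j; simp
  rw [spinFlip, hconj, Jc_eq_map_ofReal, map_ofReal_mul, map_ofReal_mul]

lemma charpoly_map_ofReal_mul_spinFlip (A : Matrix (Fin 4) (Fin 4) ℝ) :
    (A.map Complex.ofReal * spinFlip (A.map Complex.ofReal)).charpoly =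
      ((A * Jr) ^ 2).charpoly.map Complex.ofRealHom := by
  rw [← charpoly_map, spinFlip_map_ofReal, ← map_ofReal_mul, sq]
  simp only [Matrix.mul_assoc]
  rfl

lemma concurrence_eq_of_charpoly {ρ : Matrix (Fin 4) (Fin 4) ℂ} {x y z : ℝ}
    (h : (ρ * spinFlip ρ).charpoly =
      (X * (X - C (x ^ 2)) * (X - C (y ^ 2)) * (X - C (z ^ 2))).map Complex.ofRealHom)
    (hy : y ≤ 0) (hz : z ≤ 0) (hxyz : 0 ≤ x + y + z) :
    concurrence ρ = x + y + z := by
  wlog hyz : y ^ 2 ≤ z ^ 2 generalizing y z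
  · rw [add_right_comm]
    exact this (by rw [h, mul_right_comm _ (X - C (y ^ 2))]) hz hy (by linarith)
      (le_of_not_ge hyz)
  have hzx : z ^ 2 ≤ x ^ 2 := by nlinarith
  have hroots : (ρ * spinFlip ρ).charpoly.roots.map Complex.re = ↑[0, y ^ 2, z ^ 2, x ^ 2] := by
    have hprod : (X * (X - C (x ^ 2)) * (X - C (y ^ 2)) * (X - C (z ^ 2)) : ℝ[X]) =
        ((↑[0, y ^ 2, z ^ 2, x ^ 2] : Multiset ℝ).map fun a => X - C a).prod := by
      simp only [Multiset.map_coe, Multiset.prod_coe, List.map_cons, List.map_nil,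
        List.prod_cons, List.prod_nil, map_zero, sub_zero]
      ring
    have hmap : Polynomial.map Complex.ofRealHom ∘ (fun a : ℝ => X - C a) =
        (fun a => X - C a) ∘ Complex.ofRealHom := by
      ext1 a; simp
    rw [h, hprod, Polynomial.map_multiset_prod, Multiset.map_map, hmap, ← Multiset.map_map,
      roots_multiset_prod_X_sub_C, Multiset.map_map]
    simp
  have hsort : ((ρ * spinFlip ρ).charpoly.roots.map Complex.re).sort (· ≤ ·) =
      [0, y ^ 2, z ^ 2, x ^ 2] := by
    rw [hroots, Multiset.coe_sort]
    apply List.mergeSort_of_pairwise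
    simp [sq_nonneg, hyz, hzx, hyz.trans hzx]
  have hx : 0 ≤ x := by linarith
  simp only [concurrence, hsort]
  show max 0 (√(x ^ 2) - √(z ^ 2) - √(y ^ 2) - √0) = x + y + z
  rw [Real.sqrt_sq hx, Real.sqrt_sq_eq_abs, Real.sqrt_sq_eq_abs, abs_of_nonpos hy, abs_of_nonpos hz,
    Real.sqrt_zero, max_eq_right (by linarith)]
  ring

section FlipGram

variable {ι : Type*}

def flipGram (ψ : ι → Fin 4 → ℝ) : Matrix ι ι ℝ :=
  of ψ * Jr * (of ψ)ᵀ

lemma flipGram_apply (ψ : ι → Fin 4 → ℝ) (i j : ι) :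
    flipGram ψ i j = ψ i ⬝ᵥ (Jr *ᵥ ψ j) := by
  simp only [flipGram, Matrix.mul_apply, dotProduct, mulVec, Finset.mul_sum, Finset.sum_mul,
    of_apply, transpose_apply]
  rw [Finset.sum_comm]
  exact Finset.sum_congr rfl fun _ _ => Finset.sum_congr rfl fun _ _ => by ring

lemma flipGram_transpose (ψ : ι → Fin 4 → ℝ) : (flipGram ψ)ᵀ = flipGram ψ := by
  simp only [flipGram, transpose_mul, transpose_transpose, Jr_transpose, Matrix.mul_assoc]

variable [Fintype ι] [DecidableEq ι]

noncomputable def weightedFlipGram (p : ι → ℝ) (ψ : ι → Fin 4 → ℝ) : Matrix ι ι ℝ :=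
  diagonal (fun i => √(p i)) * flipGram ψ * diagonal (fun i => √(p i))

lemma isHermitian_weightedFlipGram (p : ι → ℝ) (ψ : ι → Fin 4 → ℝ) :
    (weightedFlipGram p ψ).IsHermitian := by
  rw [isHermitian_iff_isSymm, IsSymm, weightedFlipGram]
  simp only [transpose_mul, diagonal_transpose, flipGram_transpose, Matrix.mul_assoc]

variable {p : ι → ℝ}

lemma diagonal_sqrt_mul_self (hp : ∀ i, 0 ≤ p i) :
    diagonal (fun i => √(p i)) * diagonal (fun i => √(p i)) = diagonal p := by
  rw [diagonal_mul_diagonal]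
  exact congrArg diagonal (funext fun i => Real.mul_self_sqrt (hp i))

lemma trace_weightedFlipGram (hp : ∀ i, 0 ≤ p i) (ψ : ι → Fin 4 → ℝ) :
    (weightedFlipGram p ψ).trace = (diagonal p * flipGram ψ).trace := by
  rw [weightedFlipGram, trace_mul_cycle, diagonal_sqrt_mul_self hp]

lemma trace_weightedFlipGram_sq (hp : ∀ i, 0 ≤ p i) (ψ : ι → Fin 4 → ℝ) :
    ((weightedFlipGram p ψ) ^ 2).trace = ((diagonal p * flipGram ψ) ^ 2).trace := by
  set D := diagonal (fun i => √(p i))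
  set r := flipGram ψ
  have hDD : D * D = diagonal p := diagonal_sqrt_mul_self hp
  calc ((weightedFlipGram p ψ) ^ 2).trace = (D * (r * diagonal p * r * D)).trace := by
        rw [weightedFlipGram, sq, ← hDD]; simp only [Matrix.mul_assoc]; rfl
    _ = (r * diagonal p * r * diagonal p).trace := by
        rw [trace_mul_comm, ← hDD]; simp only [Matrix.mul_assoc]
    _ = ((diagonal p * r) ^ 2).trace := by
        rw [sq, Matrix.mul_assoc (diagonal p), trace_mul_comm (diagonal p)]
        simp only [Matrix.mul_assoc]

lemma det_weightedFlipGram (hp : ∀ i, 0 ≤ p i) (ψ : ι → Fin 4 → ℝ) :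
    (weightedFlipGram p ψ).det = (diagonal p * flipGram ψ).det := by
  rw [weightedFlipGram, det_mul, det_mul, det_mul, ← diagonal_sqrt_mul_self hp, det_mul]
  ring

lemma mixture_mul_Jr (hp : ∀ i, 0 ≤ p i) (ψ : ι → Fin 4 → ℝ) :
    (∑ i, p i • vecMulVec (ψ i) (ψ i)) * Jr =
      ((of ψ)ᵀ * diagonal (fun i => √(p i))) * (diagonal (fun i => √(p i)) * of ψ * Jr) := by
  rw [sum_smul_vecMulVec, ← diagonal_sqrt_mul_self hp]
  simp only [Matrix.mul_assoc]

lemma charpoly_sq_mixture_mul_Jr (hp : ∀ i, 0 ≤ p i) (ψ : ι → Fin 4 → ℝ)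
    (hcard : Fintype.card ι ≤ 4) :
    (((∑ i, p i • vecMulVec (ψ i) (ψ i)) * Jr) ^ 2).charpoly =
      X ^ (4 - Fintype.card ι) * ((weightedFlipGram p ψ) ^ 2).charpoly := by
  rw [mixture_mul_Jr hp, charpoly_mul_sq_of_card_le _ _ (by simpa using hcard), Fintype.card_fin]
  simp only [weightedFlipGram, flipGram, Matrix.mul_assoc]

end FlipGram

lemma sum_smul_pureState {ι : Type*} [Fintype ι] (p : ι → ℝ) (ψ : ι → Fin 4 → ℝ) :
    ∑ i, p i • pureState (ψ i) = (∑ i, p i • vecMulVec (ψ i) (ψ i)).map Complex.ofReal := by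
  ext a b
  simp [pureState, Matrix.sum_apply]

lemma concurrence_pureState {φ : Fin 4 → ℝ} (h : 0 ≤ φ ⬝ᵥ (Jr *ᵥ φ)) :
    concurrence (pureState φ) = φ ⬝ᵥ (Jr *ᵥ φ) := by
  have hone : ∀ i : Fin 1, 0 ≤ (1 : Fin 1 → ℝ) i := fun _ => zero_le_one
  have hM := isHermitian_weightedFlipGram (1 : Fin 1 → ℝ) (fun _ => φ)
  have hμ : hM.eigenvalues 0 = φ ⬝ᵥ (Jr *ᵥ φ) := by
    have := hM.trace_eq_sum_eigenvalues
    rw [trace_weightedFlipGram hone, trace_diagonal_mul] at this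
    simpa [flipGram_apply] using this.symm
  have hchar := charpoly_sq_mixture_mul_Jr hone (fun _ => φ) (by simp)
  rw [hM.charpoly_sq, Fin.prod_univ_one, hμ] at hchar
  have hρ : pureState φ = ∑ i : Fin 1, (1 : Fin 1 → ℝ) i • pureState φ := by simp
  have hcharρ : (pureState φ * spinFlip (pureState φ)).charpoly =
      (X * (X - C ((φ ⬝ᵥ (Jr *ᵥ φ)) ^ 2)) * (X - C (0 ^ 2)) * (X - C (0 ^ 2))).map
        Complex.ofRealHom := by
    rw [hρ, sum_smul_pureState, charpoly_map_ofReal_mul_spinFlip, hchar, Fintype.card_fin,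
      zero_pow two_ne_zero, map_zero, sub_zero]
    exact congrArg _ (by ring)
  simpa using concurrence_eq_of_charpoly hcharρ le_rfl le_rfl (by simpa using h)

lemma concurrence_mixture_eq_trace {p : Fin 3 → ℝ} (hp : ∀ i, 0 ≤ p i) (ψ : Fin 3 → Fin 4 → ℝ)
    (htr : 0 ≤ (diagonal p * flipGram ψ).trace)
    (hsq : (diagonal p * flipGram ψ).trace ^ 2 < ((diagonal p * flipGram ψ) ^ 2).trace)
    (hdet : 0 < (diagonal p * flipGram ψ).det) :
    concurrence (∑ i, p i • pureState (ψ i)) = (diagonal p * flipGram ψ).trace := by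
  have hM := isHermitian_weightedFlipGram p ψ
  have hchar : (((∑ i, p i • vecMulVec (ψ i) (ψ i)) * Jr) ^ 2).charpoly =
      X * ∏ i, (X - C (hM.eigenvalues i ^ 2)) := by
    rw [charpoly_sq_mixture_mul_Jr hp _ (by simp), hM.charpoly_sq, Fintype.card_fin, pow_one]
  set μ := hM.eigenvalues
  have hsum : ∑ i, μ i = (diagonal p * flipGram ψ).trace := by
    simpa [← trace_weightedFlipGram hp] using hM.trace_eq_sum_eigenvalues.symm
  have hsumsq : ∑ i, μ i ^ 2 = ((diagonal p * flipGram ψ) ^ 2).trace := by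
    rw [← trace_weightedFlipGram_sq hp, trace_eq_sum_of_charpoly_eq_prod hM.charpoly_sq]
  have hprod : ∏ i, μ i = (diagonal p * flipGram ψ).det := by
    simpa [← det_weightedFlipGram hp] using hM.det_eq_prod_eigenvalues.symm
  obtain ⟨σ, hσ1, hσ2⟩ :=
    exists_perm_nonpos_of_sq_sum_lt (by rwa [hsum, hsumsq]) (hprod ▸ hdet)
  rw [← hsum, ← Equiv.sum_comp σ μ, Fin.sum_univ_three fun i => μ (σ i)] at htr ⊢
  refine concurrence_eq_of_charpoly ?_ hσ1 hσ2 htr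
  rw [sum_smul_pureState, charpoly_map_ofReal_mul_spinFlip, hchar, ← Equiv.prod_comp σ,
    Fin.prod_univ_three]
  simp only [mul_assoc]

theorem rank_three_optimal_pos_general
    (ψ : Fin 3 → Fin 4 → ℝ)
    (r : Matrix (Fin 3) (Fin 3) ℝ)
    (hr : ∀ i j, r i j = ψ i ⬝ᵥ (Jr *ᵥ ψ j))
    (hdiag : ∀ i, 0 < r i i)
    (hoff : ∀ i j, i ≠ j → r i i * r j j - r i j ^ 2 < 0)
    (hdet : 0 < r.det) :
    ∀ p : Fin 3 → ℝ, (∀ i, 0 < p i) → ∑ i, p i = 1 →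
      concurrence (∑ i, p i • pureState (ψ i)) = ∑ i, p i * r i i ∧
      ∑ i, p i * r i i = ∑ i, p i * concurrence (pureState (ψ i)) := by
  intro p hp _
  have hpure : ∀ i, concurrence (pureState (ψ i)) = r i i := fun i =>
    (hr i i).symm ▸ concurrence_pureState (hr i i ▸ hdiag i).le
  obtain rfl : r = flipGram ψ := Matrix.ext fun i j => (hr i j).trans (flipGram_apply ψ i j).symm
  refine ⟨?_, by simp only [hpure]⟩
  rw [← trace_diagonal_mul]
  refine concurrence_mixture_eq_trace (fun i => (hp i).le) ψ ?_
    (sq_trace_diagonal_mul_lt hp (flipGram_transpose ψ) hoff) ?_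
  · rw [trace_diagonal_mul]
    exact Finset.sum_nonneg fun i _ => (mul_pos (hp i) (hdiag i)).le
  · rw [det_mul, det_diagonal]
    exact mul_pos (Finset.prod_pos fun i _ => hp i) hdet

/-- Optimality for triples, Case 1: if `rᵢᵢ > 0`, `rᵢᵢrⱼⱼ − rᵢⱼ² < 0` for `i ≠ j`
and `det r > 0`, then every mixture of the three real pure states is optimally
entangled. -/
theorem rank_three_optimal_pos
    (ψ : Fin 3 → Fin 4 → ℝ) (hind : LinearIndependent ℝ ψ)
    (hunit : ∀ i, ∑ j, ψ i j ^ 2 = 1)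
    (r : Matrix (Fin 3) (Fin 3) ℝ)
    (hr : ∀ i j, r i j = ψ i ⬝ᵥ (Jr *ᵥ ψ j))
    (hdiag : ∀ i, 0 < r i i)
    (hoff : ∀ i j, i ≠ j → r i i * r j j - r i j ^ 2 < 0)
    (hdet : 0 < r.det) :
    ∀ p : Fin 3 → ℝ, (∀ i, 0 < p i) → ∑ i, p i = 1 →
      concurrence (∑ i, p i • pureState (ψ i)) = ∑ i, p i * r i i ∧
      ∑ i, p i * r i i = ∑ i, p i * concurrence (pureState (ψ i)) :=
  rank_three_optimal_pos_general ψ r hr hdiag hoff hdet
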